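/- arXiv:1604.00863 — 2 statements merged into one kernel-verified Lean document; each statement's English description precedes it below -/
import Mathlib

section
/- Let a, b, m₂, M ∈ ℝ with m₂ > 0 and M > 0, let z, q₁, q₂ ∈ {0,1}, and suppose: −M·(1 − q₁) ≤ a − b ≤ 0 and −M·(1 − q₂) ≤ b − a − m₂·(1 − z) ≤ 0. Then q₁ + q₂ ≤ 1 + z. -/
/-- Valid cut `q₁ + q₂ ≤ 1 + z` for the two inequality rows
`a − b ≤ 0` and `b − a ≤ m₂ (1 − z)` generated by a single constraint
`a ≤ b` with binary activity variable `z`, where `q₁, q₂` are the binary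
variables forcing the respective rows to be active. -/
theorem primal_rows_cut
    (a b m₂ M z q₁ q₂ : ℝ)
    (hm₂ : 0 < m₂) (hM : 0 < M)
    (hz : z = 0 ∨ z = 1) (hq₁ : q₁ = 0 ∨ q₁ = 1) (hq₂ : q₂ = 0 ∨ q₂ = 1)
    (h₁ : -M * (1 - q₁) ≤ a - b) (h₂ : a - b ≤ 0)
    (h₃ : -M * (1 - q₂) ≤ b - a - m₂ * (1 - z)) (h₄ : b - a - m₂ * (1 - z) ≤ 0) :
    q₁ + q₂ ≤ 1 + z := by
  rcases hz with hz | hz <;> rcases hq₁ with hq₁ | hq₁ <;> rcases hq₂ with hq₂ | hq₂ <;>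
    subst hz hq₁ hq₂ <;> nlinarith
end

section
/- Let λ, m₁, M ∈ ℝ with m₁ > 0 and M > 0, let z, q₃, q₄ ∈ {0,1}, and suppose: −M·(1 − q₃) ≤ −λ ≤ 0 and −M·(1 − q₄) ≤ λ − m₁·z ≤ 0. Then q₃ + q₄ ≤ 1 + (1 − z), i.e., q₃ + q₄ ≤ 2 − z. -/
/-- Valid cut `q₃ + q₄ ≤ 2 − z` for the two inequality rows `−λ ≤ 0` and
`λ ≤ m₁ z` generated by a dual variable `λ` with binary activity variable
`z`, where `q₃, q₄` are the binary variables forcing the respective rows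
to be active. -/
theorem dual_rows_cut
    (lam m₁ M z q₃ q₄ : ℝ)
    (hm₁ : 0 < m₁) (hM : 0 < M)
    (hz : z = 0 ∨ z = 1) (hq₃ : q₃ = 0 ∨ q₃ = 1) (hq₄ : q₄ = 0 ∨ q₄ = 1)
    (h₁ : -M * (1 - q₃) ≤ -lam) (h₂ : -lam ≤ 0)
    (h₃ : -M * (1 - q₄) ≤ lam - m₁ * z) (h₄ : lam - m₁ * z ≤ 0) :
    q₃ + q₄ ≤ 1 + (1 - z) := by
  rcases hz with rfl|rfl <;> rcases hq₃ with rfl|rfl <;> rcases hq₄ with rfl|rfl <;> nlinarith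
end
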